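/- For every α ∈ (0,2), c > 0, and x ∈ ℝ, the derivative of SIGTRON satisfies the parameterized mirror symmetry s_{α,c}'(x) = s_{2−α, 1/c}'(−x), where both derivatives exist at every real point. -/
import Mathlib

open Real Filter Set

/-- `c_α = c^{1−α}/(α−1)` (real power). -/
noncomputable def cA (α c : ℝ) : ℝ := c ^ (1 - α) / (α - 1)

/-- SIGTRON: extended asymmetric sigmoid with Perceptron. -/
noncomputable def sigtron (α c : ℝ) (x : ℝ) : ℝ :=
  if α = 1 then 1 / (1 + Real.exp (-x))
  else if α < 1 then
    if x ≤ -(cA α c) then 1 / (1 + (1 + x / cA α c) ^ ((1 : ℝ) / (1 - α))) else 1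
  else
    if -(cA α c) < x then 1 / (1 + (1 + x / cA α c) ^ ((1 : ℝ) / (1 - α))) else 0

lemma maxpow_hasDerivAt_zero (p : ℝ) (hp : 1 < p) :
    HasDerivAt (fun u : ℝ => max u 0 ^ p) 0 0 := by
  rw [hasDerivAt_iff_tendsto_slope]
  apply squeeze_zero_norm' (a := fun u : ℝ => |u| ^ (p - 1))
  · filter_upwards [self_mem_nhdsWithin] with u (hu : u ≠ 0)
    rw [slope_def_field]
    rcases lt_or_gt_of_ne hu with h | h
    · rw [max_eq_right h.le, max_eq_right le_rfl,
        Real.zero_rpow (by positivity : p ≠ 0)]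
      simp only [sub_self, zero_div, norm_zero]
      positivity
    · rw [max_eq_left h.le, max_eq_right le_rfl, Real.zero_rpow (by positivity : p ≠ 0),
        sub_zero, sub_zero, abs_of_pos h]
      rw [show u ^ p / u = u ^ (p - 1) by
        rw [Real.rpow_sub h, Real.rpow_one]]
      rw [Real.norm_eq_abs, abs_of_nonneg (Real.rpow_nonneg h.le _)]
  · have hcont : ContinuousAt (fun u : ℝ => |u| ^ (p - 1)) 0 := by
      apply ContinuousAt.rpow_const (continuous_abs.continuousAt)
      right; linarith
    have h2 := (hcont.continuousWithinAt (s := {(0:ℝ)}ᶜ)).tendsto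
    simpa [Real.zero_rpow (sub_ne_zero.2 hp.ne')] using h2

lemma maxpow_diff (p : ℝ) (hp : 1 < p) (u : ℝ) :
    DifferentiableAt ℝ (fun u : ℝ => max u 0 ^ p) u := by
  rcases lt_trichotomy u 0 with h | h | h
  · have hev : (fun u : ℝ => max u 0 ^ p) =ᶠ[nhds u] fun _ => (0:ℝ) := by
      filter_upwards [eventually_lt_nhds h] with v hv
      rw [max_eq_right hv.le, Real.zero_rpow (by positivity : p ≠ 0)]
    exact (differentiableAt_const (0:ℝ)).congr_of_eventuallyEq hev
  · subst h; exact (maxpow_hasDerivAt_zero p hp).differentiableAt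
  · have hev : (fun u : ℝ => max u 0 ^ p) =ᶠ[nhds u] fun v => v ^ p := by
      filter_upwards [eventually_gt_nhds h] with v hv
      rw [max_eq_left hv.le]
    exact ((Real.hasDerivAt_rpow_const (p := p)
      (Or.inl h.ne')).differentiableAt).congr_of_eventuallyEq hev

lemma cA_neg {α c : ℝ} (hα : α < 1) (hc : 0 < c) : cA α c < 0 :=
  div_neg_of_pos_of_neg (Real.rpow_pos_of_pos hc _) (by linarith)

lemma cA_pos {α c : ℝ} (hα : 1 < α) (hc : 0 < c) : 0 < cA α c :=
  div_pos (Real.rpow_pos_of_pos hc _) (by linarith)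

lemma cA_mirror {α c : ℝ} (hc : 0 < c) : cA (2 - α) (1 / c) = -(cA α c) := by
  unfold cA
  rw [show (1:ℝ) - (2 - α) = -(1 - α) by ring, show (2 - α) - 1 = -(α - 1) by ring,
    one_div, Real.inv_rpow hc.le, ← Real.rpow_neg hc.le, neg_neg, div_neg]

lemma sigtron_lt_eq {α c : ℝ} (hα : α ∈ Set.Ioo (0:ℝ) 1) (hc : 0 < c) :
    sigtron α c = fun x => 1 / (1 + max (1 + x / cA α c) 0 ^ ((1:ℝ) / (1 - α))) := by
  have hk : cA α c < 0 := cA_neg hα.2 hc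
  funext x
  rw [sigtron, if_neg hα.2.ne, if_pos hα.2]
  by_cases h : x ≤ -(cA α c)
  · rw [if_pos h]
    have hu : (0:ℝ) ≤ 1 + x / cA α c := by
      have : (-1:ℝ) ≤ x / cA α c := by
        rw [le_div_iff_of_neg hk]; linarith
      linarith
    rw [max_eq_left hu]
  · rw [if_neg h]
    push_neg at h
    have hu : 1 + x / cA α c < 0 := by
      have : x / cA α c < -1 := by
        rw [div_lt_iff_of_neg hk]; linarith
      linarith
    rw [max_eq_right hu.le, Real.zero_rpow (one_div_ne_zero (by have := hα.2; intro hz; linarith : (1:ℝ) - α ≠ 0))]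
    norm_num

lemma sigtron_gt_eq {α c : ℝ} (hα : α ∈ Set.Ioo (1:ℝ) 2) (hc : 0 < c) :
    sigtron α c = fun x =>
      max (1 + x / cA α c) 0 ^ ((1:ℝ) / (α - 1)) /
        (1 + max (1 + x / cA α c) 0 ^ ((1:ℝ) / (α - 1))) := by
  have hk : 0 < cA α c := cA_pos hα.1 hc
  have hm : (1:ℝ) / (1 - α) = -(1 / (α - 1)) := by
    rw [show (1:ℝ) - α = -(α - 1) by ring, div_neg]
  funext x
  rw [sigtron, if_neg hα.1.ne', if_neg (not_lt.2 hα.1.le)]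
  by_cases h : -(cA α c) < x
  · rw [if_pos h]
    have hu : (0:ℝ) < 1 + x / cA α c := by
      have : (-1:ℝ) < x / cA α c := by
        rw [lt_div_iff₀ hk]; linarith
      linarith
    rw [max_eq_left hu.le, hm, Real.rpow_neg hu.le]
    set t := (1 + x / cA α c) ^ ((1:ℝ) / (α - 1)) with ht_def
    have ht : (0:ℝ) < t := Real.rpow_pos_of_pos hu _
    rw [eq_div_iff (by linarith : (1:ℝ) + t ≠ 0), div_mul_eq_mul_div,
      div_eq_iff (by intro hz; have : 0 < t⁻¹ := inv_pos.2 ht; linarith : (1:ℝ) + t⁻¹ ≠ 0)]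
    field_simp
    ring
  · rw [if_neg h]
    push_neg at h
    have hu : 1 + x / cA α c ≤ 0 := by
      have : x / cA α c ≤ -1 := by
        rw [div_le_iff₀ hk]; linarith
      linarith
    rw [max_eq_right hu, Real.zero_rpow (one_div_ne_zero (by have := hα.1; intro hz; linarith : α - 1 ≠ 0))]
    norm_num

lemma sigtron_diff {α c : ℝ} (hα : α ∈ Set.Ioo (0:ℝ) 2) (hc : 0 < c) (y : ℝ) :
    DifferentiableAt ℝ (sigtron α c) y := by
  have hinner : DifferentiableAt ℝ (fun x : ℝ => 1 + x / cA α c) y :=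
    (differentiableAt_id.div_const _).const_add 1
  rcases lt_trichotomy α 1 with h | h | h
  · have hp : (1:ℝ) < 1 / (1 - α) :=
      (one_lt_one_div (by linarith) (by linarith [hα.1]))
    rw [sigtron_lt_eq ⟨hα.1, h⟩ hc]
    have hG : DifferentiableAt ℝ
        (fun x : ℝ => max (1 + x / cA α c) 0 ^ ((1:ℝ) / (1 - α))) y :=
      (maxpow_diff _ hp _).comp y hinner
    have hpos : (0:ℝ) < 1 + max (1 + y / cA α c) 0 ^ ((1:ℝ) / (1 - α)) := by
      have : (0:ℝ) ≤ max (1 + y / cA α c) 0 ^ ((1:ℝ) / (1 - α)) :=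
        Real.rpow_nonneg (le_max_right _ _) _
      linarith
    exact DifferentiableAt.div (differentiableAt_const 1) (hG.const_add 1) hpos.ne'
  · subst h
    have : sigtron 1 c = fun x => 1 / (1 + Real.exp (-x)) := by
      funext x; rw [sigtron, if_pos rfl]
    rw [this]
    apply DifferentiableAt.div (differentiableAt_const 1)
    · exact (Real.differentiable_exp.comp differentiable_neg).differentiableAt.const_add 1
    · have := Real.exp_pos (-y); intro hcontra; linarith
  · have hm : (1:ℝ) < 1 / (α - 1) :=
      (one_lt_one_div (by linarith) (by linarith [hα.2]))
    rw [sigtron_gt_eq ⟨h, hα.2⟩ hc]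
    have hG : DifferentiableAt ℝ
        (fun x : ℝ => max (1 + x / cA α c) 0 ^ ((1:ℝ) / (α - 1))) y :=
      (maxpow_diff _ hm _).comp y hinner
    have hpos : (0:ℝ) < 1 + max (1 + y / cA α c) 0 ^ ((1:ℝ) / (α - 1)) := by
      have : (0:ℝ) ≤ max (1 + y / cA α c) 0 ^ ((1:ℝ) / (α - 1)) :=
        Real.rpow_nonneg (le_max_right _ _) _
      linarith
    exact DifferentiableAt.div hG (hG.const_add 1) hpos.ne'

lemma sigtron_mirror_lt {α c : ℝ} (hα : α ∈ Set.Ioo (0:ℝ) 1) (hc : 0 < c) (x : ℝ) :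
    sigtron α c x = 1 - sigtron (2 - α) (1 / c) (-x) := by
  have hk : cA α c < 0 := cA_neg hα.2 hc
  have hβ1 : (2:ℝ) - α ≠ 1 := by intro h; apply hα.2.ne; linarith
  have hβlt : ¬ ((2:ℝ) - α < 1) := by push_neg; linarith [hα.2]
  rw [sigtron, if_neg hα.2.ne, if_pos hα.2, sigtron, if_neg hβ1, if_neg hβlt,
    cA_mirror hc, neg_neg, neg_div_neg_eq,
    show (1:ℝ) - (2 - α) = -(1 - α) by ring, div_neg]
  rcases lt_trichotomy x (-(cA α c)) with hlt | heq | hgt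
  · rw [if_pos hlt.le, if_pos (by linarith : cA α c < -x)]
    have hu : (0:ℝ) < 1 + x / cA α c := by
      have : (-1:ℝ) < x / cA α c := by
        rw [lt_div_iff_of_neg hk]; linarith
      linarith
    rw [Real.rpow_neg hu.le]
    have ht : (0:ℝ) < (1 + x / cA α c) ^ ((1:ℝ) / (1 - α)) :=
      Real.rpow_pos_of_pos hu _
    field_simp
    ring
  · rw [if_pos heq.le, if_neg (by rw [heq, neg_neg]; exact lt_irrefl _)]
    have hz : 1 + x / cA α c = 0 := by
      rw [heq, neg_div, div_self hk.ne]; ring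
    rw [hz, Real.zero_rpow (one_div_ne_zero (by linarith [hα.2] : (1:ℝ) - α ≠ 0))]
    norm_num
  · rw [if_neg (not_le.2 hgt), if_neg (by intro h; linarith)]
    norm_num

lemma sigtron_mirror {α c : ℝ} (hα : α ∈ Set.Ioo (0:ℝ) 2) (hc : 0 < c) (x : ℝ) :
    sigtron α c x = 1 - sigtron (2 - α) (1 / c) (-x) := by
  rcases lt_trichotomy α 1 with h | h | h
  · exact sigtron_mirror_lt ⟨hα.1, h⟩ hc x
  · subst h
    rw [show (2:ℝ) - 1 = 1 by norm_num, sigtron, if_pos rfl, sigtron, if_pos rfl, neg_neg]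
    have h1 := Real.exp_pos (-x)
    have h2 := Real.exp_pos x
    rw [Real.exp_neg] at *
    field_simp
    ring
  · have := sigtron_mirror_lt (α := 2 - α) (c := 1 / c)
      ⟨by linarith [hα.2], by linarith⟩ (by positivity) (-x)
    rw [show (2:ℝ) - (2 - α) = α by ring, one_div_one_div, neg_neg] at this
    linarith

/-- For every `α ∈ (0,2)`, `c > 0` and `x ∈ ℝ`, both SIGTRON
functions `s_{α,c}` and `s_{2−α,1/c}` are differentiable at every real point and the
derivatives satisfy the parameterized mirror symmetry
`s_{α,c}'(x) = s_{2−α,1/c}'(−x)`. -/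
theorem sigtron_stmt7 (α c : ℝ) (hα : α ∈ Set.Ioo (0 : ℝ) 2) (hc : 0 < c) (x : ℝ) :
    (∀ y, DifferentiableAt ℝ (sigtron α c) y) ∧
    (∀ y, DifferentiableAt ℝ (sigtron (2 - α) (1 / c)) y) ∧
    deriv (sigtron α c) x = deriv (sigtron (2 - α) (1 / c)) (-x) := by
  have hβ : (2 - α) ∈ Set.Ioo (0:ℝ) 2 := ⟨by linarith [hα.2], by linarith [hα.1]⟩
  have hc' : (0:ℝ) < 1 / c := by positivity
  refine ⟨fun y => sigtron_diff hα hc y, fun y => sigtron_diff hβ hc' y, ?_⟩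
  set d := deriv (sigtron (2 - α) (1 / c)) (-x) with hd
  have h1 : HasDerivAt (sigtron (2 - α) (1 / c)) d (-x) :=
    (sigtron_diff hβ hc' (-x)).hasDerivAt
  have h2 : HasDerivAt (fun y : ℝ => sigtron (2 - α) (1 / c) (-y)) (d * (-1)) x :=
    HasDerivAt.comp x h1 (hasDerivAt_neg x)
  have h3 : HasDerivAt (fun y : ℝ => 1 - sigtron (2 - α) (1 / c) (-y)) (-(d * (-1))) x :=
    h2.const_sub 1
  have heq : sigtron α c = fun y : ℝ => 1 - sigtron (2 - α) (1 / c) (-y) :=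
    funext fun y => sigtron_mirror hα hc y
  rw [heq, h3.deriv]; ring
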